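/- (Kolmogorov's theorem.) Let P be an irreducible Markov matrix on a finite set V (i.e., for all v,w there is n ≥ 1 with P^n(v,w) > 0). Then there exists a strictly positive function κ : V → ℝ_{>0} with κ(v)P(v,w) = κ(w)P(w,v) for all v,w ∈ V if and only if for every closed path ω = v₀v₁⋯v_n v₀ one has P(v₀,v₁)P(v₁,v₂)⋯P(v_n,v₀) = P(v₀,v_n)P(v_n,v_{n-1})⋯P(v₁,v₀). -/

import Mathlib

/-!
Detailed balance turns the product of `κ (ω i) * P (ω i) (ω (i + 1))` around a cycle into the
product of the reversed transitions times the same product of `κ`-values, which cancels.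
Conversely, fix a base point `v₀` and for each `v` a path of positive transitions from `v₀`
to `v`, and let `κ v` be the ratio of the forward to the backward transition product along it.
Gluing the path to `v`, the step `v → w` and the reversed path to `w` gives a cycle, and the
criterion for that cycle is detailed balance at `(v, w)`. The cycle `w ⇝ v → w` shows that
`P w v > 0` whenever `P v w > 0`, so the backward products, hence `κ`, are positive.
-/

open List

section PathProd

variable {V M : Type*} [CommMonoid M] (f : V → V → M)

def pathProd (l : List V) : M := (zipWith f l l.tail).prod

@[simp] lemma pathProd_nil : pathProd f [] = 1 := rfl

@[simp] lemma pathProd_singleton (a : V) : pathProd f [a] = 1 := rfl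

@[simp] lemma pathProd_cons_cons (a b : V) (l : List V) :
    pathProd f (a :: b :: l) = f a b * pathProd f (b :: l) := by
  simp [pathProd]

lemma pathProd_append {l₁ l₂ : List V} (h₁ : l₁ ≠ []) (h₂ : l₂ ≠ []) :
    pathProd f (l₁ ++ l₂) = pathProd f l₁ * f (l₁.getLast h₁) (l₂.head h₂) * pathProd f l₂ := by
  induction l₁ with
  | nil => contradiction
  | cons a l ih =>
    cases l with
    | nil => obtain ⟨b, m, rfl⟩ := exists_cons_of_ne_nil h₂; simp
    | cons b l =>
      rw [cons_append, cons_append, pathProd_cons_cons, ← cons_append, ih (cons_ne_nil _ _),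
        getLast_cons_cons, pathProd_cons_cons]
      simp only [mul_assoc]

lemma pathProd_reverse (l : List V) : pathProd f l.reverse = pathProd (Function.swap f) l := by
  induction l with
  | nil => rfl
  | cons a l ih =>
    cases l with
    | nil => rfl
    | cons b l =>
      rw [reverse_cons, pathProd_append f (by simp) (by simp), ih]
      simp [mul_comm]

lemma pathProd_ofFn {n : ℕ} (ω : Fin (n + 1) → V) :
    pathProd f (ofFn ω) = ∏ i : Fin n, f (ω i.castSucc) (ω i.succ) := by
  induction n with
  | zero => simp
  | succ n ih =>
    have htail := ih (ω ·.succ)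
    rw [ofFn_succ] at htail
    rw [ofFn_succ, ofFn_succ, pathProd_cons_cons, htail, Fin.prod_univ_succ]
    simp only [Fin.succ_castSucc]
    rfl

lemma prod_cyclic_eq_pathProd {n : ℕ} (ω : Fin (n + 1) → V) :
    ∏ i, f (ω i) (ω (i + 1)) = pathProd f (ofFn ω ++ [ω 0]) := by
  rw [pathProd_append f (by simp) (by simp), pathProd_ofFn, Fin.prod_univ_castSucc,
    Fin.last_add_one, getLast_ofFn]
  simp only [Fin.coeSucc_eq_succ, head_cons, pathProd_singleton, mul_one]
  rfl

end PathProd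

lemma pathProd_pos {V R : Type*} [CommSemiring R] [PartialOrder R] [IsStrictOrderedRing R]
    {f : V → V → R} : ∀ {l : List V}, IsChain (fun a b => 0 < f a b) l → 0 < pathProd f l
  | [], _ => by simp
  | [_], _ => by simp
  | _ :: _ :: _, h => by
    rw [isChain_cons_cons] at h
    simpa using mul_pos h.1 (pathProd_pos h.2)

lemma Matrix.reflTransGen_of_pow_apply_pos {V R : Type*} [Fintype V] [DecidableEq V] [Ring R]
    [LinearOrder R] [IsStrictOrderedRing R] {A : Matrix V V R} (hA : ∀ i j, 0 ≤ A i j)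
    {n : ℕ} {i j : V} (h : 0 < (A ^ n) i j) :
    Relation.ReflTransGen (fun a b => 0 < A a b) i j := by
  let := A.toQuiver
  obtain ⟨⟨p, -⟩⟩ := (Matrix.pow_apply_pos_iff_nonempty_path hA n i j).1 h
  clear h
  induction p with
  | nil => rfl
  | cons _ e ih => exact ih.tail e.down

def KolmogorovCriterion {V M : Type*} [CommMonoid M] (P : V → V → M) : Prop :=
  ∀ (n : ℕ) (ω : Fin (n + 1) → V), (∏ i, P (ω i) (ω (i + 1))) = ∏ i, P (ω (i + 1)) (ω i)

lemma kolmogorovCriterion_of_detailedBalance {V M : Type*} [CommMonoidWithZero M]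
    [IsCancelMulZero M] {P : V → V → M} {κ : V → M} (hκ : ∀ v, κ v ≠ 0)
    (hdb : ∀ v w, κ v * P v w = κ w * P w v) : KolmogorovCriterion P := by
  intro n ω
  have := nontrivial_of_ne _ _ (hκ (ω 0))
  have hrot : ∏ i, κ (ω (i + 1)) = ∏ i, κ (ω i) :=
    Fintype.prod_equiv (Equiv.addRight 1) _ _ fun _ => rfl
  refine mul_left_cancel₀ (Finset.prod_ne_zero_iff.2 fun i _ => hκ (ω i) : ∏ i, κ (ω i) ≠ 0) ?_
  calc (∏ i, κ (ω i)) * ∏ i, P (ω i) (ω (i + 1))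
      = (∏ i, κ (ω (i + 1))) * ∏ i, P (ω (i + 1)) (ω i) := by
        simp only [← Finset.prod_mul_distrib, hdb]
    _ = (∏ i, κ (ω i)) * ∏ i, P (ω (i + 1)) (ω i) := by rw [hrot]

namespace KolmogorovCriterion

section CommMonoid

variable {V M : Type*} [CommMonoid M] {P : V → V → M}

lemma pathProd_closed_eq (h : KolmogorovCriterion P) (a : V) (l : List V) :
    pathProd P (a :: l ++ [a]) = pathProd (Function.swap P) (a :: l ++ [a]) := by
  have h' := (prod_cyclic_eq_pathProd P _).symm.trans
    ((h l.length (a :: l).get).trans (prod_cyclic_eq_pathProd (Function.swap P) _))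
  rwa [ofFn_get] at h'

lemma pathProd_mul_eq_of_getLast (h : KolmogorovCriterion P) {a v w : V} {l₁ l₂ : List V}
    (hv : (a :: l₁).getLast (cons_ne_nil _ _) = v) (hw : (a :: l₂).getLast (cons_ne_nil _ _) = w) :
    pathProd P (a :: l₁) * P v w * pathProd (Function.swap P) (a :: l₂) =
      pathProd (Function.swap P) (a :: l₁) * P w v * pathProd P (a :: l₂) := by
  have hcycle : a :: (l₁ ++ l₂.reverse) ++ [a] = (a :: l₁) ++ (a :: l₂).reverse := by simp
  have := h.pathProd_closed_eq a (l₁ ++ l₂.reverse)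
  rwa [hcycle, pathProd_append _ (cons_ne_nil _ _) (by simp),
    pathProd_append _ (cons_ne_nil _ _) (by simp), pathProd_reverse, pathProd_reverse,
    head_reverse, hv, hw] at this

end CommMonoid

section LinearOrderedField

variable {V K : Type*} [Field K] [LinearOrder K] [IsStrictOrderedRing K] {P : V → V → K}

lemma pos_symm_of_reflTransGen (h : KolmogorovCriterion P) (hP : ∀ v w, 0 ≤ P v w) {v w : V}
    (hwv : Relation.ReflTransGen (fun a b => 0 < P a b) w v) (hvw : 0 < P v w) : 0 < P w v := by
  obtain ⟨l, hl, hlast⟩ := exists_isChain_cons_of_relationReflTransGen hwv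
  have hcycle := h.pathProd_mul_eq_of_getLast (w := w) (l₂ := []) hlast rfl
  simp only [pathProd_singleton, mul_one] at hcycle
  refine (hP w v).lt_of_ne fun hzero => ?_
  rw [← hzero, mul_zero] at hcycle
  exact (mul_pos (pathProd_pos hl) hvw).ne' hcycle

lemma exists_detailedBalance (h : KolmogorovCriterion P) (hP : ∀ v w, 0 ≤ P v w)
    (hconn : ∀ v w, Relation.ReflTransGen (fun a b => 0 < P a b) v w) :
    ∃ κ : V → K, (∀ v, 0 < κ v) ∧ ∀ v w, κ v * P v w = κ w * P w v := by
  rcases isEmpty_or_nonempty V with hV | ⟨⟨v₀⟩⟩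
  · exact ⟨1, isEmptyElim, isEmptyElim⟩
  choose l hl hlast using fun v => exists_isChain_cons_of_relationReflTransGen (hconn v₀ v)
  have hbwd (v : V) : 0 < pathProd (Function.swap P) (v₀ :: l v) :=
    pathProd_pos ((hl v).imp fun a b hab => h.pos_symm_of_reflTransGen hP (hconn b a) hab)
  refine ⟨fun v => pathProd P (v₀ :: l v) / pathProd (Function.swap P) (v₀ :: l v),
    fun v => div_pos (pathProd_pos (hl v)) (hbwd v), fun v w => ?_⟩
  rw [div_mul_eq_mul_div, div_mul_eq_mul_div, div_eq_div_iff (hbwd v).ne' (hbwd w).ne']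
  linear_combination h.pathProd_mul_eq_of_getLast (hlast v) (hlast w)

end LinearOrderedField

end KolmogorovCriterion

theorem stmt_7 {V : Type*} [Fintype V] [DecidableEq V]
    (P : Matrix V V ℝ) (hP0 : ∀ v w, 0 ≤ P v w)
    (hirr : ∀ v w, ∃ n : ℕ, 1 ≤ n ∧ 0 < (P ^ n) v w) :
    (∃ κ : V → ℝ, (∀ v, 0 < κ v) ∧ ∀ v w, κ v * P v w = κ w * P w v) ↔
    (∀ (n : ℕ) (ω : Fin (n + 1) → V),
      (∏ i, P (ω i) (ω (i + 1))) = ∏ i, P (ω (i + 1)) (ω i)) := by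
  refine ⟨fun ⟨κ, hκ, hdb⟩ => kolmogorovCriterion_of_detailedBalance (fun v => (hκ v).ne') hdb,
    fun h => KolmogorovCriterion.exists_detailedBalance h hP0 fun v w => ?_⟩
  obtain ⟨n, -, hn⟩ := hirr v w
  exact Matrix.reflTransGen_of_pow_apply_pos hP0 hn
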